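/- arXiv:2303.13864 — 4 statements merged into one kernel-verified Lean document; each statement's English description precedes it below -/
import Mathlib

section
/- For every integer n ≥ 3, the generalized 4-connectivity of the bubble-sort graph B_n is at most n − 2, i.e., κ₄(B_n) ≤ n − 2. -/
open SimpleGraph

/-- The bubble-sort graph `B_n`: the Cayley graph on `Sym(n)` whose connection set is the set of
adjacent transpositions `[i, i+1]`, `1 ≤ i ≤ n-1`; `σ` and `τ` are adjacent iff
`τ = σ * [i, i+1]` for some `i`. -/
def bubbleSortGraph (n : ℕ) : SimpleGraph (Equiv.Perm (Fin n)) :=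
  SimpleGraph.fromRel (fun σ τ => ∃ i j : Fin n, (j : ℕ) = (i : ℕ) + 1 ∧ τ = σ * Equiv.swap i j)

/-- `T` is a family of internally disjoint trees connecting `S` in `G`: each `T i` is a tree
(as a subgraph of `G`) containing all vertices of `S`, the trees are pairwise edge disjoint, and
any two of them share exactly the vertices of `S`. -/
def InternallyDisjointTrees {V : Type*} (G : SimpleGraph V) (S : Set V) {ℓ : ℕ}
    (T : Fin ℓ → G.Subgraph) : Prop :=
  (∀ i, (T i).coe.IsTree ∧ S ⊆ (T i).verts) ∧
    Pairwise fun i j =>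
      (T i).edgeSet ∩ (T j).edgeSet = ∅ ∧ (T i).verts ∩ (T j).verts = S

/-- `κ_G(S)`: the maximum number of internally disjoint trees connecting `S` in `G`. -/
noncomputable def treeConnectivity {V : Type*} (G : SimpleGraph V) (S : Set V) : ℕ :=
  sSup {ℓ : ℕ | ∃ T : Fin ℓ → G.Subgraph, InternallyDisjointTrees G S T}

/-- The generalized `k`-connectivity `κ_k(G) = min {κ_G(S) : S ⊆ V(G), |S| = k}`. -/
noncomputable def generalizedConnectivity {V : Type*} (G : SimpleGraph V) (k : ℕ) : ℕ :=
  sInf {m : ℕ | ∃ S : Finset V, S.card = k ∧ m = treeConnectivity G ↑S}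

/-- The vertex connectivity `κ(G)`: the minimum cardinality of a set `S` of vertices such that
`G - S` is disconnected or has at most one vertex. -/
noncomputable def vertexConnectivity {V : Type*} (G : SimpleGraph V) : ℕ :=
  sInf {k : ℕ | ∃ S : Set V,
    S.ncard = k ∧ (¬ (G.induce Sᶜ).Connected ∨ Sᶜ.ncard ≤ 1)}

/-- `V_i`: the set of permutations `σ` of `[n]` with `σ(n) = i` (last entry equal to `i`). -/
def Vpart (n : ℕ) (hn : 0 < n) (i : Fin n) : Set (Equiv.Perm (Fin n)) :=
  {σ | σ ⟨n - 1, Nat.sub_lt hn Nat.one_pos⟩ = i}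

/-! Let `S` contain three vertices, two of which, `u` and `v`, are adjacent. Every tree connecting
`S` has an edge at `u`, and the trees are edge disjoint, so there are at most `deg u` of them. If
there are `deg u = deg v` of them, every edge at `u` or at `v` lies in a tree that has no other
edge there; the tree through `uv` is then just that edge and misses the third vertex. In `B_n`
every vertex has degree `n - 1`, and any edge extends to a 4-set. -/

open Finset

theorem SimpleGraph.Reachable.mem_of_forall_adj_mem {V : Type*} {G : SimpleGraph V} {s : Set V}
    (hs : ∀ a ∈ s, ∀ b, G.Adj a b → b ∈ s) {u v : V} (h : G.Reachable u v) (hu : u ∈ s) :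
    v ∈ s := by
  obtain ⟨p⟩ := h
  induction p with
  | nil => exact hu
  | cons hadj _ ih => exact ih (hs _ hu _ hadj)

namespace InternallyDisjointTrees

variable {V : Type*} {G : SimpleGraph V} {S : Set V} {ℓ : ℕ} {T : Fin ℓ → G.Subgraph}
  {u v w : V}

theorem eq_of_adj_of_adj (hT : InternallyDisjointTrees G S T) {i j : Fin ℓ}
    (hi : (T i).Adj u v) (hj : (T j).Adj u v) : i = j := by
  by_contra hij
  have hmem : s(u, v) ∈ (T i).edgeSet ∩ (T j).edgeSet := ⟨hi, hj⟩
  rw [(hT.2 hij).1] at hmem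
  exact hmem

theorem exists_adj (hT : InternallyDisjointTrees G S T) (hu : u ∈ S) (hw : w ∈ S) (huw : u ≠ w)
    (i : Fin ℓ) : ∃ z, (T i).Adj u z := by
  obtain ⟨htree, hS⟩ := hT.1 i
  have : Nontrivial (T i).verts := ⟨⟨⟨u, hS hu⟩, ⟨w, hS hw⟩, by simpa using huw⟩⟩
  exact (Subgraph.Connected.preconnected ⟨htree.connected⟩).exists_adj_of_nontrivial ⟨u, hS hu⟩

theorem exists_forall_adj_iff_eq [G.LocallyFinite] (hT : InternallyDisjointTrees G S T)
    (hu : u ∈ S) (hw : w ∈ S) (huw : u ≠ w) (hℓ : G.degree u ≤ ℓ) {z : V} (huz : G.Adj u z) :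
    ∃ i, ∀ z', (T i).Adj u z' ↔ z' = z := by
  choose f hf using hT.exists_adj hu hw huw
  let f' : Fin ℓ → G.neighborSet u := fun i => ⟨f i, (T i).adj_sub (hf i)⟩
  have hinj : Function.Injective f' := fun i j hij =>
    hT.eq_of_adj_of_adj (hf i) ((show f i = f j from congrArg Subtype.val hij) ▸ hf j)
  have hcard : Fintype.card (Fin ℓ) = Fintype.card (G.neighborSet u) :=
    le_antisymm (Fintype.card_le_of_injective f' hinj)
      (by rwa [Fintype.card_fin, card_neighborSet_eq_degree])
  have hsurj := ((Fintype.bijective_iff_injective_and_card f').2 ⟨hinj, hcard⟩).2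
  have eq_f : ∀ i z', (T i).Adj u z' → z' = f i := fun i z' hz' => by
    obtain ⟨j, hj⟩ := hsurj ⟨z', (T i).adj_sub hz'⟩
    have hj' : f j = z' := congrArg Subtype.val hj
    rw [← hj', hT.eq_of_adj_of_adj (hf j) (hj' ▸ hz')]
  obtain ⟨i, hi⟩ := hsurj ⟨z, huz⟩
  have hi' : f i = z := congrArg Subtype.val hi
  exact ⟨i, fun z' => ⟨fun h => hi' ▸ eq_f i z' h, fun h => h ▸ hi' ▸ hf i⟩⟩

theorem length_lt_max_degree [G.LocallyFinite] (hT : InternallyDisjointTrees G S T)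
    (hu : u ∈ S) (hv : v ∈ S) (hw : w ∈ S) (huv : G.Adj u v) (hwu : w ≠ u) (hwv : w ≠ v) :
    ℓ < max (G.degree u) (G.degree v) := by
  by_contra! hℓ
  obtain ⟨i, hi⟩ := hT.exists_forall_adj_iff_eq hu hw hwu.symm (le_of_max_le_left hℓ) huv
  obtain ⟨j, hj⟩ := hT.exists_forall_adj_iff_eq hv hw hwv.symm (le_of_max_le_right hℓ) huv.symm
  have hij : i = j := hT.eq_of_adj_of_adj ((hi v).2 rfl) (((hj u).2 rfl).symm)
  subst hij
  obtain ⟨htree, hS⟩ := hT.1 i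
  have hclosed : ∀ a ∈ {x : (T i).verts | ↑x = u ∨ ↑x = v}, ∀ b, (T i).coe.Adj a b →
      b ∈ {x : (T i).verts | ↑x = u ∨ ↑x = v} := by
    rintro a (ha | ha) b hab
    · exact Or.inr ((hi b).1 (ha ▸ hab))
    · exact Or.inl ((hj b).1 (ha ▸ hab))
  have hreach := htree.connected.preconnected ⟨u, hS hu⟩ ⟨w, hS hw⟩
  exact (hreach.mem_of_forall_adj_mem hclosed (Or.inl rfl)).elim hwu hwv

end InternallyDisjointTrees

section

variable {V : Type*} {G : SimpleGraph V}

theorem treeConnectivity_le_max_degree_sub_one [G.LocallyFinite] {S : Finset V}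
    (hS : 3 ≤ #S) {u v : V} (hu : u ∈ S) (hv : v ∈ S) (huv : G.Adj u v) :
    treeConnectivity G S ≤ max (G.degree u) (G.degree v) - 1 := by
  classical
  obtain ⟨w, hw, hwv⟩ := exists_mem_ne (s := S.erase u) (by rw [card_erase_of_mem hu]; omega) v
  have hw' := mem_erase.1 hw
  refine csSup_le' fun ℓ ⟨T, hT⟩ => ?_
  have := hT.length_lt_max_degree hu hv (mem_coe.2 hw'.2) huv hw'.1 hwv
  omega

theorem generalizedConnectivity_le_sub_one_of_degree_le [Fintype V] [G.LocallyFinite] {d k : ℕ}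
    (hd : ∀ x, G.degree x ≤ d) {u v : V} (huv : G.Adj u v) (hk : 3 ≤ k)
    (hkV : k ≤ Fintype.card V) : generalizedConnectivity G k ≤ d - 1 := by
  classical
  obtain ⟨S, hsub, hS⟩ := exists_superset_card_eq (card_le_two.trans (by omega)) hkV
  calc generalizedConnectivity G k ≤ treeConnectivity G S := Nat.sInf_le ⟨S, hS, rfl⟩
    _ ≤ max (G.degree u) (G.degree v) - 1 :=
        treeConnectivity_le_max_degree_sub_one (by omega) (hsub (mem_insert_self _ _))
          (hsub (mem_insert_of_mem (mem_singleton_self _))) huv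
    _ ≤ d - 1 := Nat.sub_le_sub_right (max_le (hd u) (hd v)) 1

end

theorem exists_eq_mul_swap_of_bubbleSortGraph_adj {n : ℕ} {σ τ : Equiv.Perm (Fin n)}
    (h : (bubbleSortGraph n).Adj σ τ) :
    ∃ i j : Fin n, (j : ℕ) = i + 1 ∧ τ = σ * Equiv.swap i j := by
  obtain ⟨-, h | ⟨i, j, hij, rfl⟩⟩ := (fromRel_adj _ _ _).1 h
  · exact h
  · exact ⟨i, j, hij, by rw [mul_assoc, Equiv.swap_mul_self, mul_one]⟩

theorem bubbleSortGraph_adj_mul_swap {m : ℕ} (σ : Equiv.Perm (Fin (m + 1))) (i : Fin m) :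
    (bubbleSortGraph (m + 1)).Adj σ (σ * Equiv.swap i.castSucc i.succ) := by
  refine (fromRel_adj _ _ _).2 ⟨?_, Or.inl ⟨_, _, rfl, rfl⟩⟩
  simpa [Equiv.swap_eq_one_iff] using (Fin.castSucc_lt_succ (i := i)).ne

noncomputable instance (n : ℕ) : (bubbleSortGraph n).LocallyFinite :=
  fun _ => Fintype.ofFinite _

theorem bubbleSortGraph_degree_le {m : ℕ} (σ : Equiv.Perm (Fin (m + 1))) :
    (bubbleSortGraph (m + 1)).degree σ ≤ m := by
  classical
  have hsub : (bubbleSortGraph (m + 1)).neighborFinset σ ⊆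
      univ.image fun i : Fin m => σ * Equiv.swap i.castSucc i.succ := by
    intro τ hτ
    obtain ⟨i, j, hij, rfl⟩ :=
      exists_eq_mul_swap_of_bubbleSortGraph_adj ((mem_neighborFinset _ _ _).1 hτ)
    have hi : (i : ℕ) < m := by omega
    refine mem_image.2 ⟨⟨i, hi⟩, mem_univ _, ?_⟩
    congr 2
    ext
    simp only [Fin.val_succ]
    omega
  simpa using (card_le_card hsub).trans card_image_le

/-- For every integer `n ≥ 3`, the generalized 4-connectivity of the bubble-sort graph `B_n`
is at most `n - 2`. -/
theorem generalizedConnectivity_four_bubbleSortGraph_le (n : ℕ) (hn : 3 ≤ n) :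
    generalizedConnectivity (bubbleSortGraph n) 4 ≤ n - 2 := by
  obtain ⟨m, rfl⟩ : ∃ m, n = m + 1 := ⟨n - 1, by omega⟩
  have hcard : 4 ≤ Fintype.card (Equiv.Perm (Fin (m + 1))) := by
    rw [Fintype.card_perm, Fintype.card_fin]
    exact le_trans (by decide) (Nat.factorial_le hn)
  exact generalizedConnectivity_le_sub_one_of_degree_le bubbleSortGraph_degree_le
    (bubbleSortGraph_adj_mul_swap 1 ⟨0, by omega⟩) (by norm_num) hcard
end

section
/- Let G be a connected graph with minimum degree δ and let k be an integer with 3 ≤ k ≤ |V(G)|. Then κ_k(G) ≤ δ. Moreover, if G contains two adjacent vertices both of degree δ, then κ_k(G) ≤ δ − 1. -/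
/-!
A tree connecting `S` must use an edge at every vertex `u ∈ S`, and the trees are edge disjoint,
so there are at most `deg u` of them; taking `u` of minimum degree gives `κ_k(G) ≤ δ`.
If `u v` is an edge and `S ⊇ {u, v, w}`, every tree needs two distinct edges at `u` or `v`
(one at each of them, and if that is the single edge `uv`, a further one leaving `{u, v}` towards
`w`). Only `deg u + deg v - 1` such edges exist, whence `2ℓ ≤ 2δ - 1`.
-/

open SimpleGraph

open Finset Function

theorem mul_card_le_card_of_pairwise_disjoint {α ι : Type*} [Fintype ι] {E : ι → Set α}
    (hE : Pairwise (Disjoint on E)) (F : Finset α) {m : ℕ}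
    (hm : ∀ i, m ≤ (↑F ∩ E i).ncard) : m * Fintype.card ι ≤ #F := by
  classical
  have hcard : ∀ i, (↑F ∩ E i).ncard = #(F.filter (· ∈ E i)) := fun i => by
    rw [← Set.ncard_coe_finset, coe_filter]
    rfl
  have hdisj : (↑(univ : Finset ι) : Set ι).PairwiseDisjoint fun i => F.filter (· ∈ E i) :=
    fun i _ j _ hij => disjoint_filter_filter' _ _ (hE hij)
  calc m * Fintype.card ι = ∑ _i : ι, m := by simp [mul_comm]
    _ ≤ ∑ i, #(F.filter (· ∈ E i)) := sum_le_sum fun i _ => hcard i ▸ hm i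
    _ = #(univ.biUnion fun i => F.filter (· ∈ E i)) := (card_biUnion hdisj).symm
    _ ≤ #F := card_le_card (biUnion_subset.2 fun _ _ => filter_subset _ _)

namespace SimpleGraph

variable {V : Type*} {G : SimpleGraph V}

theorem card_incidenceFinset_union_add_one [Fintype V] [DecidableRel G.Adj] [DecidableEq V]
    {u v : V} (huv : G.Adj u v) :
    #(G.incidenceFinset u ∪ G.incidenceFinset v) + 1 = G.degree u + G.degree v := by
  have hinter : G.incidenceFinset u ∩ G.incidenceFinset v = {s(u, v)} := by
    rw [← coe_inj, coe_inter, coe_incidenceFinset, coe_incidenceFinset, coe_singleton,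
      G.incidenceSet_inter_incidenceSet_of_adj huv]
  rw [← card_incidenceFinset_eq_degree, ← card_incidenceFinset_eq_degree,
    ← card_union_add_card_inter, hinter, card_singleton]

namespace Subgraph

variable {H : G.Subgraph}

theorem exists_adj_of_mem_of_notMem (hH : H.coe.Connected) {X : Set V} {x y : V}
    (hx : x ∈ H.verts) (hy : y ∈ H.verts) (hxX : x ∈ X) (hyX : y ∉ X) :
    ∃ a ∈ X, ∃ b ∉ X, H.Adj a b := by
  obtain ⟨p⟩ := hH ⟨x, hx⟩ ⟨y, hy⟩
  obtain ⟨d, -, hd₁, hd₂⟩ := p.exists_boundary_dart {z | ↑z ∈ X} (by exact hxX) (by exact hyX)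
  exact ⟨d.fst, hd₁, d.snd, hd₂, d.adj⟩

theorem incidenceSet_inter_edgeSet_nonempty (hH : H.coe.Connected) {u s : V}
    (hu : u ∈ H.verts) (hs : s ∈ H.verts) (hus : u ≠ s) :
    (G.incidenceSet u ∩ H.edgeSet).Nonempty := by
  obtain ⟨a, rfl, b, -, hab⟩ :=
    exists_adj_of_mem_of_notMem hH (X := {u}) hu hs rfl (Set.mem_singleton_iff.not.2 hus.symm)
  exact ⟨s(a, b), ⟨H.edgeSet_subset hab, Sym2.mem_mk_left _ _⟩, hab⟩

theorem one_lt_ncard_incidenceSet_union_inter_edgeSet [Finite V] (hH : H.coe.Connected)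
    {u v w : V} (hu : u ∈ H.verts) (hv : v ∈ H.verts) (hw : w ∈ H.verts) (huv : u ≠ v)
    (hwu : w ≠ u) (hwv : w ≠ v) :
    1 < ((G.incidenceSet u ∪ G.incidenceSet v) ∩ H.edgeSet).ncard := by
  rw [Set.one_lt_ncard_iff]
  obtain ⟨eu, ⟨heuG, hueu⟩, heu⟩ := incidenceSet_inter_edgeSet_nonempty hH hu hw hwu.symm
  obtain ⟨ev, ⟨hevG, hvev⟩, hev⟩ := incidenceSet_inter_edgeSet_nonempty hH hv hw hwv.symm
  by_cases he : eu = ev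
  · -- the edges at `u` and at `v` coincide, so `H` needs one more edge to reach `w`
    obtain ⟨a, ha, b, hb, hab⟩ :=
      exists_adj_of_mem_of_notMem hH (X := {u, v}) hu hw (by simp) (by simp [hwu, hwv])
    have hab_ne : s(a, b) ≠ eu := by
      intro h
      have huv_eu : eu = s(u, v) := (Sym2.mem_and_mem_iff huv).1 ⟨hueu, he ▸ hvev⟩
      have hb_eu : b ∈ eu := h ▸ Sym2.mem_mk_right a b
      exact hb (by simpa [huv_eu] using hb_eu)
    refine ⟨s(a, b), eu, ⟨?_, hab⟩, ⟨.inl ⟨heuG, hueu⟩, heu⟩, hab_ne⟩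
    rcases ha with rfl | rfl
    · exact .inl ⟨H.edgeSet_subset hab, Sym2.mem_mk_left _ _⟩
    · exact .inr ⟨H.edgeSet_subset hab, Sym2.mem_mk_left _ _⟩
  · exact ⟨eu, ev, ⟨.inl ⟨heuG, hueu⟩, heu⟩, ⟨.inr ⟨hevG, hvev⟩, hev⟩, he⟩

end Subgraph

theorem generalizedConnectivity_le_of_forall_le (S : Finset V) {n : ℕ}
    (h : ∀ ℓ (T : Fin ℓ → G.Subgraph), InternallyDisjointTrees G S T → ℓ ≤ n) :
    generalizedConnectivity G #S ≤ n :=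
  calc generalizedConnectivity G #S ≤ treeConnectivity G S := Nat.sInf_le ⟨S, rfl, rfl⟩
    _ ≤ n := csSup_le' fun ℓ ⟨T, hT⟩ => h ℓ T hT

variable {S : Set V} {ℓ : ℕ} {T : Fin ℓ → G.Subgraph}

theorem InternallyDisjointTrees.pairwise_disjoint_edgeSet (hT : InternallyDisjointTrees G S T) :
    Pairwise (Disjoint on fun i => (T i).edgeSet) :=
  fun _ _ hij => Set.disjoint_iff_inter_eq_empty.2 (hT.2 hij).1

variable [Fintype V] [DecidableRel G.Adj]

theorem InternallyDisjointTrees.le_degree (hT : InternallyDisjointTrees G S T) {u s : V}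
    (hu : u ∈ S) (hs : s ∈ S) (hus : u ≠ s) : ℓ ≤ G.degree u := by
  classical
  have key := mul_card_le_card_of_pairwise_disjoint hT.pairwise_disjoint_edgeSet
    (G.incidenceFinset u) fun i => by
      obtain ⟨htree, hS⟩ := hT.1 i
      rw [coe_incidenceFinset]
      exact (Set.ncard_pos).2 <|
        Subgraph.incidenceSet_inter_edgeSet_nonempty htree.connected (hS hu) (hS hs) hus
  simpa [card_incidenceFinset_eq_degree] using key

theorem InternallyDisjointTrees.two_mul_add_one_le (hT : InternallyDisjointTrees G S T)
    {u v w : V} (huv : G.Adj u v) (hu : u ∈ S) (hv : v ∈ S) (hw : w ∈ S) (hwu : w ≠ u)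
    (hwv : w ≠ v) : 2 * ℓ + 1 ≤ G.degree u + G.degree v := by
  classical
  have key := mul_card_le_card_of_pairwise_disjoint hT.pairwise_disjoint_edgeSet
    (G.incidenceFinset u ∪ G.incidenceFinset v) (m := 2) fun i => by
      obtain ⟨htree, hS⟩ := hT.1 i
      rw [coe_union, coe_incidenceFinset, coe_incidenceFinset]
      exact Subgraph.one_lt_ncard_incidenceSet_union_inter_edgeSet htree.connected
        (hS hu) (hS hv) (hS hw) huv.ne hwu hwv
  have hcard := card_incidenceFinset_union_add_one huv
  simp only [Fintype.card_fin] at key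
  omega

end SimpleGraph

theorem generalizedConnectivity_le_minDegree_general {V : Type*} [Fintype V] [Nonempty V]
    (G : SimpleGraph V) [DecidableRel G.Adj]
    (k : ℕ) (hk3 : 3 ≤ k) (hk : k ≤ Fintype.card V) :
    generalizedConnectivity G k ≤ G.minDegree ∧
      ((∃ u v : V, G.Adj u v ∧ G.degree u = G.minDegree ∧ G.degree v = G.minDegree) →
        generalizedConnectivity G k ≤ G.minDegree - 1) := by
  classical
  refine ⟨?_, ?_⟩
  · obtain ⟨u, hu⟩ := G.exists_minimal_degree_vertex
    obtain ⟨s, -, hs⟩ := exists_mem_notMem_of_card_lt_card (s := {u}) (t := univ)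
      (by simp; omega)
    obtain ⟨S, hS, rfl⟩ := exists_superset_card_eq (s := {u, s}) (card_le_two.trans (by omega)) hk
    refine generalizedConnectivity_le_of_forall_le S fun ℓ T hT => hu ▸ ?_
    exact hT.le_degree (u := u) (s := s) (hS (by simp)) (hS (by simp)) (by simp_all [eq_comm])
  · rintro ⟨u, v, huv, hu, hv⟩
    obtain ⟨w, -, hw⟩ := exists_mem_notMem_of_card_lt_card (s := {u, v}) (t := univ)
      (card_le_two.trans_lt (by simp; omega))
    obtain ⟨S, hS, rfl⟩ := exists_superset_card_eq (s := {u, v, w}) (card_le_three.trans hk3) hk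
    refine generalizedConnectivity_le_of_forall_le S fun ℓ T hT => ?_
    have := hT.two_mul_add_one_le (w := w) huv (hS (by simp)) (hS (by simp)) (hS (by simp))
      (by simp_all) (by simp_all)
    omega

/-- Let `G` be a connected graph with minimum degree `δ` and `3 ≤ k ≤ |V(G)|`. Then
`κ_k(G) ≤ δ`; moreover, if `G` has two adjacent vertices both of degree `δ`, then
`κ_k(G) ≤ δ - 1`. -/
theorem generalizedConnectivity_le_minDegree {V : Type*} [Fintype V] [Nonempty V]
    (G : SimpleGraph V) [DecidableRel G.Adj] (hG : G.Connected)
    (k : ℕ) (hk3 : 3 ≤ k) (hk : k ≤ Fintype.card V) :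
    generalizedConnectivity G k ≤ G.minDegree ∧
      ((∃ u v : V, G.Adj u v ∧ G.degree u = G.minDegree ∧ G.degree v = G.minDegree) →
        generalizedConnectivity G k ≤ G.minDegree - 1) :=
  generalizedConnectivity_le_minDegree_general G k hk3 hk
end

section
/- For every integer n ≥ 2, the (vertex) connectivity of the bubble-sort graph B_n equals n − 1, i.e., κ(B_n) = n − 1. -/
open SimpleGraph

/-!
Deleting the neighbourhood of a vertex either isolates it or leaves at most one vertex, and the
identity of `Sym(n)` has the `n - 1` adjacent transpositions as neighbours; so `κ(B_n) ≤ n - 1`.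

Conversely, deleting a set `S` of at most `n - 2` vertices leaves `B_n` connected, by induction
on `n`. Split the permutations into parts by their first entry `σ 0`: each part is a copy of
`B_{n-1}`, and `σ ~ σ * swap 0 1` is an edge ("exit") into the part of `σ 1`. Some part is free of
`S`, and two vertices of free parts are joined inside the parts and through one exit. Every other
vertex reaches a free part: if its part meets `S` in at most `n - 3` vertices, that part is still
connected and has `(n - 2)!` exits into a given free part; otherwise `S` lies in its part and its
own exit leads to a free part.
-/

open Equiv

namespace SimpleGraph

variable {V W : Type*}

theorem vertexConnectivity_le_ncard_neighborSet (G : SimpleGraph V) (v : V) :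
    vertexConnectivity G ≤ (G.neighborSet v).ncard := by
  refine Nat.sInf_le ⟨_, rfl, ?_⟩
  by_cases h : ∃ w, w ≠ v ∧ w ∉ G.neighborSet v
  · obtain ⟨w, hwv, hw⟩ := h
    have hv : v ∈ (G.neighborSet v)ᶜ := G.notMem_neighborSet_self
    have : Nontrivial ↥(G.neighborSet v)ᶜ := ⟨⟨⟨v, hv⟩, ⟨w, hw⟩, by simpa using hwv.symm⟩⟩
    refine Or.inl fun hconn => ?_
    obtain ⟨⟨x, hx⟩, hvx⟩ := hconn.preconnected.exists_adj_of_nontrivial ⟨v, hv⟩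
    exact hx hvx
  · push Not at h
    refine Or.inr <| (Set.ncard_le_ncard fun w hw => ?_).trans (Set.ncard_singleton v).le
    by_contra hwv
    exact hw (h w hwv)

theorem le_vertexConnectivity {G : SimpleGraph V} {k : ℕ}
    (h : ∀ S : Set V, S.ncard < k → (G.induce Sᶜ).Preconnected ∧ 1 < Sᶜ.ncard) :
    k ≤ vertexConnectivity G := by
  refine le_csInf ⟨_, Set.univ, rfl, Or.inr (by simp)⟩ ?_
  rintro m ⟨S, rfl, hS⟩
  by_contra! hlt
  obtain ⟨hpre, hcard⟩ := h S hlt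
  have : Nonempty ↥Sᶜ := (Set.nonempty_of_ncard_ne_zero (by omega)).to_subtype
  rcases hS with hS | hS
  · exact hS ⟨hpre⟩
  · omega

theorem Hom.reachable_induce_compl {G : SimpleGraph V} {H : SimpleGraph W} (f : H →g G)
    {S : Set V} (hH : (H.induce (f ⁻¹' S)ᶜ).Preconnected) {x y : W} (hx : f x ∉ S)
    (hy : f y ∉ S) : (G.induce Sᶜ).Reachable ⟨f x, hx⟩ ⟨f y, hy⟩ :=
  (hH ⟨x, hx⟩ ⟨y, hy⟩).map (induceHom f fun _ hz => hz :
    H.induce (f ⁻¹' S)ᶜ →g G.induce Sᶜ)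

end SimpleGraph

theorem Equiv.exists_perm_apply_eq_apply_eq {α : Type*} [DecidableEq α] {a b c d : α}
    (hab : a ≠ b) (hcd : c ≠ d) : ∃ π : Perm α, π a = c ∧ π b = d := by
  refine ⟨swap (swap b d a) c * swap b d, by simp, ?_⟩
  have : swap b d a ≠ d := by simpa [swap_apply_eq_iff] using hab
  simpa using swap_apply_of_ne_of_ne this.symm hcd.symm

theorem Equiv.Perm.decomposeFin_symm_mul_swap {n : ℕ} (c : Fin (n + 1)) (e : Perm (Fin n))
    (a b : Fin n) :
    decomposeFin.symm (c, e * swap a b) = decomposeFin.symm (c, e) * swap a.succ b.succ := by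
  ext z
  refine Fin.cases ?_ (fun w => ?_) z
  · simp [swap_apply_of_ne_of_ne (Fin.succ_ne_zero a).symm (Fin.succ_ne_zero b).symm]
  · simp [(Fin.succ_injective n).swap_apply]

theorem Equiv.Perm.factorial_le_ncard_setOf_apply_zero_apply_one {k : ℕ} {c a : Fin (k + 2)}
    (hca : c ≠ a) :
    k.factorial ≤ {σ : Perm (Fin (k + 2)) | σ 0 = c ∧ σ 1 = a}.ncard := by
  obtain ⟨π, hπ0, hπ1⟩ := exists_perm_apply_eq_apply_eq (zero_ne_one (α := Fin (k + 2))) hca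
  let f (τ : Perm (Fin k)) : Perm (Fin (k + 2)) :=
    π * decomposeFin.symm (0, decomposeFin.symm (0, τ))
  have hf : Function.Injective f :=
    (mul_right_injective π).comp <| decomposeFin.symm.injective.comp <|
      (Prod.mk_right_injective 0).comp <| decomposeFin.symm.injective.comp <|
        Prod.mk_right_injective 0
  calc k.factorial = (Set.range f).ncard := by
        rw [Set.ncard_range_of_injective hf, Nat.card_perm, Nat.card_eq_fintype_card,
          Fintype.card_fin]
    _ ≤ _ := Set.ncard_le_ncard <| Set.range_subset_iff.mpr fun τ => by simp [f, hπ0, hπ1]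

namespace bubbleSortGraph

theorem adj_iff {m : ℕ} {σ τ : Perm (Fin (m + 1))} :
    (bubbleSortGraph (m + 1)).Adj σ τ ↔ ∃ i : Fin m, τ = σ * swap i.castSucc i.succ := by
  have hrel {σ τ : Perm (Fin (m + 1))} :
      (∃ i j : Fin (m + 1), (j : ℕ) = i + 1 ∧ τ = σ * swap i j) ↔
        ∃ i : Fin m, τ = σ * swap i.castSucc i.succ := by
    constructor
    · rintro ⟨i, j, hij, rfl⟩
      exact ⟨⟨i, by omega⟩, by congr; ext; simp [hij]⟩
    · rintro ⟨i, rfl⟩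
      exact ⟨_, _, by simp, rfl⟩
  rw [bubbleSortGraph, fromRel_adj, hrel, hrel]
  constructor
  · rintro ⟨-, h | ⟨i, rfl⟩⟩
    · exact h
    · exact ⟨i, by simp [mul_assoc]⟩
  · rintro ⟨i, rfl⟩
    refine ⟨fun h => ?_, Or.inl ⟨i, rfl⟩⟩
    simpa [swap_eq_one_iff, Fin.ext_iff] using (mul_eq_left.mp h.symm)

theorem ncard_neighborSet_one (n : ℕ) : ((bubbleSortGraph n).neighborSet 1).ncard = n - 1 := by
  cases n with
  | zero => simp
  | succ m =>
    have : (bubbleSortGraph (m + 1)).neighborSet 1 =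
        Set.range fun i : Fin m => swap i.castSucc i.succ := by
      ext τ
      simp [adj_iff, eq_comm]
    rw [this, Set.ncard_range_of_injective, Nat.card_eq_fintype_card, Fintype.card_fin,
      Nat.add_sub_cancel]
    intro i j h
    have h' := congrArg (· i.castSucc) h
    simp only [swap_apply_left, swap_apply_def] at h'
    split_ifs at h' <;> simp only [Fin.ext_iff, Fin.val_castSucc, Fin.val_succ] at * <;> omega

variable {m : ℕ}

def consHom (c : Fin (m + 2)) : bubbleSortGraph (m + 1) →g bubbleSortGraph (m + 2) where
  toFun e := Perm.decomposeFin.symm (c, e)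
  map_rel' {e _} h := by
    obtain ⟨i, rfl⟩ := adj_iff.mp h
    exact adj_iff.mpr ⟨i.succ, by rw [Perm.decomposeFin_symm_mul_swap, Fin.succ_castSucc]⟩

theorem consHom_injective (c : Fin (m + 2)) : Function.Injective (consHom c) :=
  Perm.decomposeFin.symm.injective.comp (Prod.mk_right_injective c)

theorem range_consHom (c : Fin (m + 2)) : Set.range (consHom c) = {σ | σ 0 = c} := by
  ext σ
  constructor
  · rintro ⟨e, rfl⟩
    exact Perm.decomposeFin_symm_apply_zero c e
  · obtain ⟨⟨c', e⟩, rfl⟩ := Perm.decomposeFin.symm.surjective σ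
    rintro (rfl : Perm.decomposeFin.symm (c', e) 0 = c)
    exact ⟨e, by simp [consHom]⟩

theorem ncard_preimage_consHom (c : Fin (m + 2)) (S : Set (Perm (Fin (m + 2)))) :
    (consHom c ⁻¹' S).ncard = (S ∩ {σ | σ 0 = c}).ncard := by
  rw [← Set.preimage_inter_range, Set.ncard_preimage_of_injective_subset_range
    (consHom_injective c) Set.inter_subset_right, range_consHom]

theorem adj_mul_swap_zero_one (σ : Perm (Fin (m + 2))) :
    (bubbleSortGraph (m + 2)).Adj σ (σ * swap 0 1) :=
  adj_iff.mpr ⟨0, rfl⟩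

section InductionStep

variable {k : ℕ} {S : Set (Perm (Fin (k + 2)))}

theorem reachable_of_apply_zero_eq
    (ih : ∀ T : Set (Perm (Fin (k + 1))), T.ncard ≤ k - 1 →
      ((bubbleSortGraph (k + 1)).induce Tᶜ).Preconnected)
    {c : Fin (k + 2)} (hc : (S ∩ {σ | σ 0 = c}).ncard ≤ k - 1) {u v : Perm (Fin (k + 2))}
    (hu : u ∉ S) (hv : v ∉ S) (huc : u 0 = c) (hvc : v 0 = c) :
    ((bubbleSortGraph (k + 2)).induce Sᶜ).Reachable ⟨u, hu⟩ ⟨v, hv⟩ := by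
  obtain ⟨x, rfl⟩ : u ∈ Set.range (consHom c) := by rwa [range_consHom]
  obtain ⟨y, rfl⟩ : v ∈ Set.range (consHom c) := by rwa [range_consHom]
  exact (consHom c).reachable_induce_compl (ih _ (by rwa [ncard_preimage_consHom])) hu hv

theorem reachable_of_apply_zero_notMem
    (ih : ∀ T : Set (Perm (Fin (k + 1))), T.ncard ≤ k - 1 →
      ((bubbleSortGraph (k + 1)).induce Tᶜ).Preconnected)
    {u v : Perm (Fin (k + 2))} (hu : u ∉ S) (hv : v ∉ S)
    (hu0 : u 0 ∉ (· 0) '' S) (hv0 : v 0 ∉ (· 0) '' S) :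
    ((bubbleSortGraph (k + 2)).induce Sᶜ).Reachable ⟨u, hu⟩ ⟨v, hv⟩ := by
  have notMem {σ : Perm (Fin (k + 2))} (h : σ 0 ∉ (· 0) '' S) : σ ∉ S :=
    fun hσ => h ⟨σ, hσ, rfl⟩
  have within {x y : Perm (Fin (k + 2))} (hx : x ∉ S) (hy : y ∉ S) (hxy : x 0 = y 0)
      (h : x 0 ∉ (· 0) '' S) :
      ((bubbleSortGraph (k + 2)).induce Sᶜ).Reachable ⟨x, hx⟩ ⟨y, hy⟩ := by
    refine reachable_of_apply_zero_eq ih ?_ hx hy rfl hxy.symm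
    have hempty : S ∩ {σ | σ 0 = x 0} = ∅ :=
      Set.eq_empty_of_forall_notMem fun σ hσ => h ⟨σ, hσ.1, hσ.2⟩
    rw [hempty, Set.ncard_empty]
    exact Nat.zero_le _
  by_cases huv : u 0 = v 0
  · exact within hu hv huv hu0
  obtain ⟨π, hπu, hπv⟩ := exists_perm_apply_eq_apply_eq (zero_ne_one (α := Fin (k + 2))) huv
  have hπ' : (π * swap 0 1 : Perm (Fin (k + 2))) 0 = v 0 := by simpa using hπv
  have hπS := notMem (hπu ▸ hu0)
  have hπS' := notMem (hπ' ▸ hv0)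
  have edge : ((bubbleSortGraph (k + 2)).induce Sᶜ).Adj ⟨π, hπS⟩ ⟨_, hπS'⟩ :=
    adj_mul_swap_zero_one π
  exact ((within hu hπS hπu.symm hu0).trans edge.reachable).trans
    (within hπS' hv hπ' (hπ' ▸ hv0))

theorem exists_reachable_apply_zero_notMem
    (ih : ∀ T : Set (Perm (Fin (k + 1))), T.ncard ≤ k - 1 →
      ((bubbleSortGraph (k + 1)).induce Tᶜ).Preconnected)
    (hS : S.ncard ≤ k) {u : Perm (Fin (k + 2))} (hu : u ∉ S) :
    ∃ (w : Perm (Fin (k + 2))) (hw : w ∉ S), w 0 ∉ (· 0) '' S ∧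
      ((bubbleSortGraph (k + 2)).induce Sᶜ).Reachable ⟨u, hu⟩ ⟨w, hw⟩ := by
  by_cases hc : u 0 ∉ (· 0) '' S
  · exact ⟨u, hu, hc, .rfl⟩
  rcases le_or_gt (S ∩ {σ | σ 0 = u 0}).ncard (k - 1) with hsmall | hbig
  -- the part of `u` is connected, and it has `k!` exits into the free part `a`, at most `k - 1`
  -- of them deleted
  · obtain ⟨a, ha⟩ : ∃ a, a ∉ (· 0) '' S := by
      by_contra! h
      have himage := Set.ncard_image_le (f := (· 0)) (s := S)
      rw [Set.eq_univ_of_forall h, Set.ncard_univ, Nat.card_fin] at himage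
      omega
    have hfiber := Perm.factorial_le_ncard_setOf_apply_zero_apply_one (c := u 0) (a := a)
      (by rintro rfl; exact ha (not_not.mp hc))
    obtain ⟨σ, ⟨hσ0, hσ1⟩, hσS⟩ : ∃ σ ∈ {σ | σ 0 = u 0 ∧ σ 1 = a}, σ ∉ S := by
      by_contra! h
      have := Set.ncard_le_ncard (t := S ∩ {σ | σ 0 = u 0}) fun σ hσ => ⟨h σ hσ, hσ.1⟩
      have := Nat.self_le_factorial k
      have := Nat.factorial_pos k
      omega
    have hw0 : (σ * swap 0 1 : Perm (Fin (k + 2))) 0 = a := by simpa using hσ1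
    have hwS : σ * swap 0 1 ∉ S := fun h => ha ⟨_, h, hw0⟩
    have edge : ((bubbleSortGraph (k + 2)).induce Sᶜ).Adj ⟨σ, hσS⟩ ⟨_, hwS⟩ :=
      adj_mul_swap_zero_one σ
    exact ⟨_, hwS, hw0 ▸ ha,
      (reachable_of_apply_zero_eq ih hsmall hu hσS rfl hσ0).trans edge.reachable⟩
  -- all of `S` lies in the part of `u`, so the exit of `u` itself leads to a free part
  · have hSsub : S ⊆ {σ | σ 0 = u 0} :=
      Set.inter_eq_left.mp (Set.eq_of_subset_of_ncard_le Set.inter_subset_left (by omega))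
    have hw0 : (u * swap 0 1 : Perm (Fin (k + 2))) 0 = u 1 := by simp
    have hfree : u 1 ∉ (· 0) '' S := fun ⟨σ, hσ, hσ0⟩ =>
      zero_ne_one (u.injective ((hSsub hσ).symm.trans hσ0))
    have hwS : u * swap 0 1 ∉ S := fun h => hfree ⟨_, h, hw0⟩
    have edge : ((bubbleSortGraph (k + 2)).induce Sᶜ).Adj ⟨u, hu⟩ ⟨_, hwS⟩ :=
      adj_mul_swap_zero_one u
    exact ⟨_, hwS, hw0 ▸ hfree, edge.reachable⟩

theorem preconnected_induce_compl_succ_succ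
    (ih : ∀ T : Set (Perm (Fin (k + 1))), T.ncard ≤ k - 1 →
      ((bubbleSortGraph (k + 1)).induce Tᶜ).Preconnected)
    (hS : S.ncard ≤ k) : ((bubbleSortGraph (k + 2)).induce Sᶜ).Preconnected := by
  rintro ⟨u, hu⟩ ⟨v, hv⟩
  obtain ⟨w, hw, hw0, huw⟩ := exists_reachable_apply_zero_notMem ih hS hu
  obtain ⟨w', hw', hw'0, hvw'⟩ := exists_reachable_apply_zero_notMem ih hS hv
  exact (huw.trans (reachable_of_apply_zero_notMem ih hw hw' hw0 hw'0)).trans hvw'.symm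

end InductionStep

-- For `n ≤ 1` the truncated bound `n - 2 = 0` is harmless: `B_n` has a single vertex.
theorem preconnected_induce_compl : ∀ {n : ℕ} {S : Set (Perm (Fin n))}, S.ncard ≤ n - 2 →
    ((bubbleSortGraph n).induce Sᶜ).Preconnected
  | 0, _, _ | 1, _, _ => .of_subsingleton
  | _ + 2, _, hS =>
    preconnected_induce_compl_succ_succ (fun _ hT => preconnected_induce_compl hT) hS

end bubbleSortGraph

theorem vertexConnectivity_bubbleSortGraph_general (n : ℕ) :
    vertexConnectivity (bubbleSortGraph n) = n - 1 := by
  refine le_antisymm ?_ (le_vertexConnectivity fun S hS => ⟨?_, ?_⟩)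
  · calc vertexConnectivity (bubbleSortGraph n)
        ≤ ((bubbleSortGraph n).neighborSet 1).ncard := vertexConnectivity_le_ncard_neighborSet _ 1
      _ = n - 1 := bubbleSortGraph.ncard_neighborSet_one n
  · exact bubbleSortGraph.preconnected_induce_compl (by omega)
  · have hcompl := Set.ncard_add_ncard_compl S
    rw [Nat.card_perm, Nat.card_eq_fintype_card, Fintype.card_fin] at hcompl
    have := Nat.self_le_factorial n
    omega

/-- For every integer `n ≥ 2`, the vertex connectivity of the bubble-sort graph `B_n`
equals `n - 1`. -/
theorem vertexConnectivity_bubbleSortGraph (n : ℕ) (hn : 2 ≤ n) :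
    vertexConnectivity (bubbleSortGraph n) = n - 1 :=
  vertexConnectivity_bubbleSortGraph_general n
end

section
/- Let n ≥ 3 and let i, j be distinct elements of [n]. The (vertex) connectivity of the subgraph of the bubble-sort graph B_n induced by V_i ∪ V_j equals n − 2, i.e., κ(B_n[V_i ∪ V_j]) = n − 2. -/
open SimpleGraph

namespace BSGAux

open Equiv Set

variable {n : ℕ}

/-- The coset of permutations agreeing with `g` at all positions `≥ m`. -/
def coset (g : Equiv.Perm (Fin n)) (m : ℕ) : Set (Equiv.Perm (Fin n)) :=
  {σ | ∀ j : Fin n, m ≤ (j : ℕ) → σ j = g j}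

lemma self_mem_coset (g : Equiv.Perm (Fin n)) (m : ℕ) : g ∈ coset g m := fun _ _ => rfl

lemma coset_mono (g : Equiv.Perm (Fin n)) {m m' : ℕ} (h : m ≤ m') :
    coset g m ⊆ coset g m' := fun σ hσ j hj => hσ j (le_trans h hj)

lemma coset_eq_of_mem {g σ : Equiv.Perm (Fin n)} {m : ℕ} (h : σ ∈ coset g m) :
    coset σ m = coset g m := by
  ext τ
  constructor
  · intro hτ j hj; rw [hτ j hj, h j hj]
  · intro hτ j hj; rw [hτ j hj, ← h j hj]

lemma mem_coset_succ_iff {g τ : Equiv.Perm (Fin n)} {m : ℕ} (hm : m < n) :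
    τ ∈ coset g m ↔ τ ∈ coset g (m + 1) ∧ τ ⟨m, hm⟩ = g ⟨m, hm⟩ := by
  constructor
  · intro h
    exact ⟨fun j hj => h j (by omega), h ⟨m, hm⟩ le_rfl⟩
  · rintro ⟨h1, h2⟩ j hj
    rcases eq_or_lt_of_le hj with heq | hlt
    · have : j = ⟨m, hm⟩ := Fin.ext (by simp [← heq])
      rw [this]; exact h2
    · exact h1 j hlt

lemma coset_le_one_eq {g σ : Equiv.Perm (Fin n)} {m : ℕ} (hm : m ≤ 1)
    (h : σ ∈ coset g m) : σ = g := by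
  have h1 : σ ∈ coset g 1 := coset_mono g hm h
  set π := g⁻¹ * σ with hπ
  have hfix : ∀ j : Fin n, 1 ≤ (j : ℕ) → π j = j := by
    intro j hj
    simp [hπ, Equiv.Perm.mul_apply, h1 j hj]
  have hall : ∀ j : Fin n, π j = j := by
    intro j
    rcases Nat.eq_zero_or_pos (j : ℕ) with h0 | hpos
    · by_contra hne
      have h1' : 1 ≤ ((π j : Fin n) : ℕ) := by
        by_contra hc
        exact hne (by ext; omega)
      have := hfix (π j) h1'
      exact hne (π.injective this)
    · exact hfix j hpos
  have : π = 1 := Equiv.ext fun j => hall j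
  have : g * π = g := by rw [this, mul_one]
  rw [hπ] at this
  simpa [← mul_assoc] using this

lemma coset_zero_or_one_eq_singleton (g : Equiv.Perm (Fin n)) {m : ℕ} (hm : m ≤ 1) :
    coset g m = {g} := by
  apply Set.eq_singleton_iff_unique_mem.2
  exact ⟨self_mem_coset g m, fun σ hσ => coset_le_one_eq hm hσ⟩

/-- A witness permutation in the coset with two prescribed values. -/
lemma exists_two_val (g : Equiv.Perm (Fin n)) (m : ℕ) (p q a b : Fin n)
    (hpq : p ≠ q) (hab : a ≠ b) (hp : (p : ℕ) ≤ m) (hq : (q : ℕ) ≤ m)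
    (ha : (a : ℕ) ≤ m) (hb : (b : ℕ) ≤ m) :
    ∃ σ : Equiv.Perm (Fin n), σ ∈ coset g (m + 1) ∧ σ p = g a ∧ σ q = g b := by
  set s1 := Equiv.swap p a with hs1
  set b' := s1 b with hb'
  set s2 := Equiv.swap q b' with hs2
  have hb'p : b' ≠ p := by
    intro hc
    have : b = s1 p := by rw [← hc, hb']; simp [hs1]
    rw [hs1, Equiv.swap_apply_left] at this
    exact hab this.symm
  refine ⟨g * (s1 * s2), ?_, ?_, ?_⟩
  · intro j hj
    have hjp : j ≠ p := fun hc => by subst hc; omega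
    have hja : j ≠ a := fun hc => by subst hc; omega
    have hjq : j ≠ q := fun hc => by subst hc; omega
    have hjb' : j ≠ b' := by
      intro hc
      have hble : (b' : ℕ) ≤ m := by
        rw [hb', hs1, Equiv.swap_apply_def]
        split_ifs <;> omega
      subst hc; omega
    simp only [Equiv.Perm.mul_apply, hs2, hs1]
    rw [Equiv.swap_apply_of_ne_of_ne hjq hjb', Equiv.swap_apply_of_ne_of_ne hjp hja]
  · simp only [Equiv.Perm.mul_apply, hs2]
    rw [Equiv.swap_apply_of_ne_of_ne hpq (fun hc => hb'p hc.symm)]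
    simp [hs1]
  · simp only [Equiv.Perm.mul_apply, hs2, Equiv.swap_apply_left, hb', hs1]
    congr 1
    exact Equiv.swap_apply_self _ _ _

/-- A witness permutation in the coset with one prescribed value. -/
lemma one_val_mem (g : Equiv.Perm (Fin n)) (m : ℕ) (p a : Fin n)
    (hp : (p : ℕ) ≤ m) (ha : (a : ℕ) ≤ m) :
    g * Equiv.swap p a ∈ coset g (m + 1) ∧ (g * Equiv.swap p a) p = g a := by
  constructor
  · intro j hj
    have hjp : j ≠ p := fun hc => by subst hc; omega
    have hja : j ≠ a := fun hc => by subst hc; omega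
    simp only [Equiv.Perm.mul_apply]
    rw [Equiv.swap_apply_of_ne_of_ne hjp hja]
  · simp [Equiv.Perm.mul_apply]

lemma ncard_coset_ge (g : Equiv.Perm (Fin n)) {k : ℕ} (h1 : 1 ≤ k) (h2 : k ≤ n) :
    k ≤ (coset g k).ncard := by
  have h0n : 0 < n := by omega
  set f : Fin k → Equiv.Perm (Fin n) :=
    fun p => g * Equiv.swap ⟨(p : ℕ), lt_of_lt_of_le p.2 h2⟩ ⟨0, h0n⟩ with hf
  have hmem : Set.range f ⊆ coset g k := by
    rintro σ ⟨p, rfl⟩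
    intro j hj
    have hjp : j ≠ ⟨(p : ℕ), lt_of_lt_of_le p.2 h2⟩ := by
      intro hc; have := p.2; subst hc; simp at hj; omega
    have hj0 : j ≠ ⟨0, h0n⟩ := by
      intro hc; subst hc; simp at hj; omega
    simp only [hf, Equiv.Perm.mul_apply]
    rw [Equiv.swap_apply_of_ne_of_ne hjp hj0]
  have hinj : Function.Injective f := by
    intro p q hfpq
    simp only [hf, mul_right_cancel_iff, mul_left_cancel_iff] at hfpq
    have := congrArg (fun e => e ⟨0, h0n⟩) hfpq
    simp only [Equiv.swap_apply_right] at this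
    ext
    exact congrArg Fin.val (Fin.mk.injEq _ _ _ _ ▸ (by simpa using this))
  calc k = (Set.univ : Set (Fin k)).ncard := by
            rw [Set.ncard_univ, Nat.card_eq_fintype_card, Fintype.card_fin]
    _ = (f '' Set.univ).ncard := (Set.ncard_image_of_injective _ hinj).symm
    _ ≤ (coset g k).ncard := Set.ncard_le_ncard (by rw [Set.image_univ]; exact hmem) (Set.toFinite _)

lemma values_of_coset {g σ : Equiv.Perm (Fin n)} {m : ℕ} (h : σ ∈ coset g (m + 1))
    {x : Fin n} (hx : (x : ℕ) ≤ m) : ∃ a : Fin n, (a : ℕ) ≤ m ∧ σ x = g a := by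
  refine ⟨g⁻¹ (σ x), ?_, by simp⟩
  by_contra hc
  push_neg at hc
  have h1 : σ (g⁻¹ (σ x)) = g (g⁻¹ (σ x)) := h _ (by omega)
  rw [show g (g⁻¹ (σ x)) = σ x by rw [← Equiv.Perm.mul_apply, mul_inv_cancel, Equiv.Perm.one_apply]] at h1
  have h2 := σ.injective h1
  rw [h2] at hc
  omega

lemma ncard_le_setOf_le {m : ℕ} (hm : m < n) :
    m + 1 ≤ ({a : Fin n | (a : ℕ) ≤ m}).ncard := by
  set f : Fin (m + 1) → Fin n := fun t => ⟨(t : ℕ), by omega⟩ with hf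
  have hinj : Function.Injective f := by
    intro x y h
    have h2 : ((f x : Fin n) : ℕ) = ((f y : Fin n) : ℕ) := congrArg Fin.val h
    exact Fin.ext h2
  have hmem : Set.range f ⊆ {a : Fin n | (a : ℕ) ≤ m} := by
    rintro x ⟨t, rfl⟩
    simp only [Set.mem_setOf_eq, hf]
    omega
  calc m + 1 = (Set.univ : Set (Fin (m + 1))).ncard := by
        rw [Set.ncard_univ, Nat.card_eq_fintype_card, Fintype.card_fin]
    _ = (f '' Set.univ).ncard := (Set.ncard_image_of_injective _ hinj).symm
    _ ≤ _ := Set.ncard_le_ncard (by rw [Set.image_univ]; exact hmem) (Set.toFinite _)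

lemma bsg_adj_iff {σ τ : Equiv.Perm (Fin n)} :
    (bubbleSortGraph n).Adj σ τ ↔
      σ ≠ τ ∧ ∃ p q : Fin n, (q : ℕ) = (p : ℕ) + 1 ∧ τ = σ * Equiv.swap p q := by
  rw [bubbleSortGraph, SimpleGraph.fromRel_adj]
  constructor
  · rintro ⟨hne, h | h⟩
    · exact ⟨hne, h⟩
    · obtain ⟨p, q, hpq, hστ⟩ := h
      refine ⟨hne, p, q, hpq, ?_⟩
      rw [hστ, mul_assoc, Equiv.swap_mul_self, mul_one]
  · rintro ⟨hne, h⟩; exact ⟨hne, Or.inl h⟩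

lemma adj_mul_swap {σ : Equiv.Perm (Fin n)} {p q : Fin n} (h : (q : ℕ) = (p : ℕ) + 1) :
    (bubbleSortGraph n).Adj σ (σ * Equiv.swap p q) := by
  rw [bsg_adj_iff]
  refine ⟨?_, p, q, h, rfl⟩
  intro hc
  have h2 : σ p = (σ * Equiv.swap p q) p := by rw [← hc]
  simp only [Equiv.Perm.mul_apply, Equiv.swap_apply_left] at h2
  have h3 := σ.injective h2
  have h4 : (p : ℕ) = (q : ℕ) := congrArg Fin.val h3
  omega

lemma induce_singleton_connected {V : Type*} (G : SimpleGraph V) (v : V) :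
    (G.induce {v}).Connected := by
  rw [SimpleGraph.connected_iff_exists_forall_reachable]
  refine ⟨⟨v, rfl⟩, ?_⟩
  rintro ⟨w, hw⟩
  have hwv : w = v := hw
  subst hwv
  exact SimpleGraph.Reachable.refl _

lemma coset_conn : ∀ m : ℕ, m ≤ n → ∀ (g : Equiv.Perm (Fin n)) (F : Set (Equiv.Perm (Fin n))),
    F ⊆ coset g m → (F = ∅ ∨ F.ncard + 2 ≤ m) →
    ((bubbleSortGraph n).induce (coset g m \ F)).Connected := by
  intro m
  induction m with
  | zero =>
    intro _ g F _ hF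
    have hFe : F = ∅ := by
      rcases hF with h | h
      · exact h
      · omega
    subst hFe
    rw [Set.diff_empty, coset_zero_or_one_eq_singleton g (by omega)]
    exact induce_singleton_connected _ _
  | succ m IH =>
    intro hmn g F hFsub hF
    by_cases hm0 : m = 0
    · subst hm0
      have hFe : F = ∅ := by
        rcases hF with h | h
        · exact h
        · omega
      subst hFe
      rw [Set.diff_empty, coset_zero_or_one_eq_singleton g (by omega)]
      exact induce_singleton_connected _ _
    -- now m ≥ 1
    have hm1 : 1 ≤ m := by omega
    have hmn' : m < n := by omega
    set pos : Fin n := ⟨m, hmn'⟩ with hpos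
    set pred : Fin n := ⟨m - 1, by omega⟩ with hpred
    have hposv : (pos : ℕ) = m := rfl
    have hpredv : (pred : ℕ) = m - 1 := rfl
    have hppv : (pos : ℕ) = (pred : ℕ) + 1 := by omega
    have hpp : pos ≠ pred := by
      intro hc
      have := congrArg Fin.val hc
      omega
    have hFcard : F.ncard + 2 ≤ m + 1 := by
      rcases hF with h | h
      · subst h; simp only [Set.ncard_empty]; omega
      · exact h
    -- helpers
    have hIH0 : ∀ σ' : Equiv.Perm (Fin n),
        ((bubbleSortGraph n).induce (coset σ' m)).Connected := by
      intro σ'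
      have := IH (by omega) σ' ∅ (Set.empty_subset _) (Or.inl rfl)
      rwa [Set.diff_empty] at this
    have hsubC : ∀ σ' ∈ coset g (m + 1), coset σ' m ⊆ coset g (m + 1) := by
      intro σ' hσ'
      rw [← coset_eq_of_mem hσ']
      exact coset_mono _ (Nat.le_succ m)
    have mem_part : ∀ σa τ : Equiv.Perm (Fin n), σa ∈ coset g (m + 1) →
        τ ∈ coset g (m + 1) → τ pos = σa pos → τ ∈ coset σa m := by
      intro σa τ ha hτ hval
      rw [mem_coset_succ_iff hmn', coset_eq_of_mem ha]
      exact ⟨hτ, hval⟩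
    have part_val : ∀ σa τ : Equiv.Perm (Fin n), τ ∈ coset σa m → τ pos = σa pos := by
      intro σa τ hτ
      exact hτ pos (by omega)
    have swap_mem : ∀ τ : Equiv.Perm (Fin n), τ ∈ coset g (m + 1) →
        τ * Equiv.swap pred pos ∈ coset g (m + 1) ∧
          (τ * Equiv.swap pred pos) pos = τ pred := by
      intro τ hτ
      constructor
      · intro jj hjj
        have h1 : jj ≠ pred := by
          intro hc; rw [hc] at hjj; omega
        have h2 : jj ≠ pos := by
          intro hc; rw [hc] at hjj; omega
        simp only [Equiv.Perm.mul_apply]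
        rw [Equiv.swap_apply_of_ne_of_ne h1 h2]
        exact hτ jj hjj
      · simp only [Equiv.Perm.mul_apply, Equiv.swap_apply_right]
    have cross : ∀ σa σb : Equiv.Perm (Fin n), σa ∈ coset g (m + 1) →
        σb ∈ coset g (m + 1) → σa pos ≠ σb pos →
        ∃ x w : Equiv.Perm (Fin n), x ∈ coset σa m ∧ w ∈ coset σb m ∧
          (bubbleSortGraph n).Adj x w := by
      intro σa σb ha hb hne
      obtain ⟨a, haa, hva⟩ := values_of_coset ha (x := pos) (by omega)
      obtain ⟨b, hbb, hvb⟩ := values_of_coset hb (x := pos) (by omega)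
      have hab : a ≠ b := by
        intro hc; rw [hc] at hva; rw [← hvb] at hva; exact hne hva
      obtain ⟨x, hxC, hxp, hxq⟩ := exists_two_val g m pos pred a b hpp hab (by omega) (by omega) haa hbb
      refine ⟨x, x * Equiv.swap pred pos, ?_, ?_, adj_mul_swap hppv⟩
      · exact mem_part σa x ha hxC (by rw [hxp, hva])
      · obtain ⟨hwC, hwv⟩ := swap_mem x hxC
        exact mem_part σb _ hb hwC (by rw [hwv, hxq, hvb])
    -- pick an untouched part
    have hAcard : m + 1 ≤ (g '' {a : Fin n | (a : ℕ) ≤ m}).ncard := by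
      rw [Set.ncard_image_of_injective _ g.injective]
      exact ncard_le_setOf_le hmn'
    have hTcard : ((fun σ => σ pos) '' F).ncard ≤ F.ncard :=
      Set.ncard_image_le (Set.toFinite _)
    have hdiff : (g '' {a : Fin n | (a : ℕ) ≤ m} \ (fun σ => σ pos) '' F).Nonempty := by
      rw [Set.nonempty_iff_ne_empty]
      intro hc
      have hsub2 := Set.diff_eq_empty.mp hc
      have := Set.ncard_le_ncard hsub2 (Set.toFinite _)
      omega
    obtain ⟨c0, hc0A, hc0T⟩ := hdiff
    obtain ⟨a0, ha0, ha0c⟩ := hc0A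
    obtain ⟨hσ0C, hσ0v⟩ := one_val_mem g m pos a0 (by omega) ha0
    set σ0 := g * Equiv.swap pos a0 with hσ0
    have hσ0c0 : σ0 pos = c0 := by rw [hσ0v, ha0c]
    have untouched0 : ∀ τ ∈ coset σ0 m, τ ∉ F := by
      intro τ hτ hτF
      apply hc0T
      refine ⟨τ, hτF, ?_⟩
      show τ pos = c0
      rw [part_val σ0 τ hτ, hσ0c0]
    have hσ0F : σ0 ∉ F := untouched0 σ0 (self_mem_coset σ0 m)
    -- patches
    have hu : σ0 ∈ coset g (m + 1) \ F := ⟨hσ0C, hσ0F⟩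
    apply SimpleGraph.induce_connected_of_patches σ0 hu
    intro v hv
    obtain ⟨hvC, hvF⟩ := hv
    by_cases hvU : F ∩ coset v m = ∅
    · -- untouched part of v
      have hvsub : coset v m ⊆ coset g (m + 1) \ F := by
        intro τ hτ
        refine ⟨hsubC v hvC hτ, fun hτF => ?_⟩
        have : τ ∈ F ∩ coset v m := ⟨hτF, hτ⟩
        rw [hvU] at this
        exact this
      by_cases hvc : v pos = σ0 pos
      · have hvmem : v ∈ coset σ0 m := mem_part σ0 v hσ0C hvC hvc
        have hσ0sub : coset σ0 m ⊆ coset g (m + 1) \ F := fun τ hτ =>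
          ⟨hsubC σ0 hσ0C hτ, untouched0 τ hτ⟩
        refine ⟨coset σ0 m, hσ0sub, self_mem_coset σ0 m, hvmem, ?_⟩
        exact (hIH0 σ0).preconnected _ _
      · obtain ⟨x, w, hx, hw, hadj⟩ := cross v σ0 hvC hσ0C hvc
        have hσ0sub : coset σ0 m ⊆ coset g (m + 1) \ F := fun τ hτ =>
          ⟨hsubC σ0 hσ0C hτ, untouched0 τ hτ⟩
        refine ⟨coset σ0 m ∪ coset v m, Set.union_subset hσ0sub hvsub,
          Or.inl (self_mem_coset σ0 m), Or.inr (self_mem_coset v m), ?_⟩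
        exact (SimpleGraph.connected_induce_union (hIH0 σ0).preconnected (hIH0 v).preconnected
          hw hx hadj.symm).preconnected _ _
    · -- touched part of v
      have hvUne : (F ∩ coset v m).Nonempty := Set.nonempty_iff_ne_empty.2 hvU
      have hvc : v pos ≠ σ0 pos := by
        intro hc
        have hvmem : v ∈ coset σ0 m := mem_part σ0 v hσ0C hvC hc
        obtain ⟨τ, hτF, hτv⟩ := hvUne
        exact untouched0 τ (by rw [← coset_eq_of_mem hvmem]; exact hτv) hτF
      have hF'pos : 0 < (F ∩ coset v m).ncard :=
        (Set.ncard_pos (Set.toFinite _)).2 hvUne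
      by_cases h2a : (F ∩ coset v m).ncard + 2 ≤ m
      · -- good touched part
        have hm3 : 3 ≤ m := by omega
        have hconnv : ((bubbleSortGraph n).induce (coset v m \ F)).Connected := by
          have := IH (by omega) v (F ∩ coset v m) Set.inter_subset_right (Or.inr h2a)
          rwa [Set.diff_inter_self_eq_diff] at this
        obtain ⟨a, haa, hva⟩ := values_of_coset hvC (x := pos) (by omega)
        have hane : a ≠ a0 := by
          intro hc
          rw [hc, ha0c] at hva
          rw [← hσ0c0] at hva
          exact hvc hva
        obtain ⟨σ'', hσ''C, hσ''p, hσ''q⟩ :=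
          exists_two_val g m pos pred a a0 hpp hane (by omega) (by omega) haa ha0
        have hσ''part : σ'' ∈ coset v m := mem_part v σ'' hvC hσ''C (by rw [hσ''p, hva])
        have hXcard : m - 1 ≤ (coset σ'' (m - 1)).ncard :=
          ncard_coset_ge σ'' (by omega) (by omega)
        have hXsub : coset σ'' (m - 1) ⊆ coset v m := by
          rw [← coset_eq_of_mem hσ''part]
          exact coset_mono _ (by omega)
        have hXF : (coset σ'' (m - 1) \ F).Nonempty := by
          rw [Set.nonempty_iff_ne_empty]
          intro hc
          have hsub2 := Set.diff_eq_empty.mp hc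
          have hsub3 : coset σ'' (m - 1) ⊆ F ∩ coset v m := fun τ hτ =>
            ⟨hsub2 hτ, hXsub hτ⟩
          have := Set.ncard_le_ncard hsub3 (Set.toFinite _)
          omega
        obtain ⟨x, hxX, hxF⟩ := hXF
        have hxC : x ∈ coset g (m + 1) := hsubC v hvC (hXsub hxX)
        obtain ⟨hwC, hwv⟩ := swap_mem x hxC
        have hxpred : x pred = σ'' pred := hxX pred (by omega)
        have hwmem : x * Equiv.swap pred pos ∈ coset σ0 m :=
          mem_part σ0 _ hσ0C hwC (by rw [hwv, hxpred, hσ''q, ha0c, hσ0c0])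
        have hσ0sub : coset σ0 m ⊆ coset g (m + 1) \ F := fun τ hτ =>
          ⟨hsubC σ0 hσ0C hτ, untouched0 τ hτ⟩
        have hvsub2 : coset v m \ F ⊆ coset g (m + 1) \ F := fun τ hτ =>
          ⟨hsubC v hvC hτ.1, hτ.2⟩
        refine ⟨coset σ0 m ∪ (coset v m \ F), Set.union_subset hσ0sub hvsub2,
          Or.inl (self_mem_coset σ0 m), Or.inr ⟨self_mem_coset v m, hvF⟩, ?_⟩
        exact (SimpleGraph.connected_induce_union (hIH0 σ0).preconnected hconnv.preconnected
          hwmem ⟨hXsub hxX, hxF⟩ (adj_mul_swap hppv).symm).preconnected _ _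
      · -- bad part: all faults in part of v
        have hFF' : F ∩ coset v m = F := by
          apply Set.eq_of_subset_of_ncard_le Set.inter_subset_left ?_ (Set.toFinite _)
          omega
        have hFsubv : F ⊆ coset v m := by
          rw [← hFF']; exact Set.inter_subset_right
        obtain ⟨hwC, hwv⟩ := swap_mem v hvC
        set w := v * Equiv.swap pred pos with hwdef
        have hwne : w pos ≠ v pos := by
          rw [hwv]
          intro hc
          exact hpp.symm (v.injective hc)
        have hwF : w ∉ F := by
          intro hc
          exact hwne (part_val v w (hFsubv hc))
        have huntw : ∀ τ ∈ coset w m, τ ∉ F := by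
          intro τ hτ hτF
          have h1 : τ pos = w pos := part_val w τ hτ
          have h2 : τ pos = v pos := part_val v τ (hFsubv hτF)
          exact hwne (h1 ▸ h2)
        have hwsub : coset w m ⊆ coset g (m + 1) \ F := fun τ hτ =>
          ⟨hsubC w hwC hτ, huntw τ hτ⟩
        have hσ0sub : coset σ0 m ⊆ coset g (m + 1) \ F := fun τ hτ =>
          ⟨hsubC σ0 hσ0C hτ, untouched0 τ hτ⟩
        by_cases hwc : w pos = σ0 pos
        · have hwmem : w ∈ coset σ0 m := mem_part σ0 w hσ0C hwC hwc
          refine ⟨coset σ0 m ∪ {v}, Set.union_subset hσ0sub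
            (by rintro τ rfl; exact ⟨hvC, hvF⟩),
            Or.inl (self_mem_coset σ0 m), Or.inr rfl, ?_⟩
          exact (SimpleGraph.connected_induce_union (hIH0 σ0).preconnected
            (induce_singleton_connected _ v).preconnected hwmem rfl
            (adj_mul_swap hppv).symm).preconnected _ _
        · obtain ⟨x, w', hx, hw', hadj⟩ := cross w σ0 hwC hσ0C hwc
          have hs'' := SimpleGraph.connected_induce_union (hIH0 σ0).preconnected (hIH0 w).preconnected
            hw' hx hadj.symm
          have hfull := SimpleGraph.connected_induce_union hs''.preconnected
            (induce_singleton_connected (bubbleSortGraph n) v).preconnected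
            (Or.inr (self_mem_coset w m)) rfl (adj_mul_swap hppv).symm
          refine ⟨(coset σ0 m ∪ coset w m) ∪ {v},
            Set.union_subset (Set.union_subset hσ0sub hwsub)
              (by rintro τ rfl; exact ⟨hvC, hvF⟩),
            Or.inl (Or.inl (self_mem_coset σ0 m)), Or.inr rfl, ?_⟩
          exact hfull.preconnected _ _


lemma not_connected_of_isolated {V : Type*} (G : SimpleGraph V) (u w : V) (hne : u ≠ w)
    (hiso : ∀ y, ¬ G.Adj u y) : ¬ G.Connected := by
  intro h
  obtain ⟨p⟩ := h.preconnected u w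
  cases p with
  | nil => exact hne rfl
  | cons h' _ => exact hiso _ h'

/-- Transfer connectivity of a doubly-induced subgraph to a singly-induced one. -/
lemma induce_induce_connected_iff {V : Type*} (G : SimpleGraph V) (W : Set V) (T : Set ↥W) :
    ((G.induce W).induce T).Connected ↔ (G.induce (Subtype.val '' T)).Connected := by
  have e : ((G.induce W).induce T) ≃g (G.induce (Subtype.val '' T)) := by
    refine ⟨Equiv.Set.image Subtype.val T Subtype.val_injective, ?_⟩
    intro a b
    simp [Equiv.Set.image_apply, SimpleGraph.comap_adj, SimpleGraph.induce]
  exact e.connected_iff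

lemma image_val_compl {V : Type*} {W : Set V} (S : Set ↥W) :
    Subtype.val '' (Sᶜ) = W \ (Subtype.val '' S) := by
  ext σ
  constructor
  · rintro ⟨x, hx, rfl⟩
    refine ⟨x.2, ?_⟩
    rintro ⟨y, hy, hyx⟩
    exact hx (by rwa [Subtype.val_injective hyx] at hy)
  · rintro ⟨hσW, hσF⟩
    exact ⟨⟨σ, hσW⟩, fun hS => hσF ⟨⟨σ, hσW⟩, hS, rfl⟩, rfl⟩

lemma Vpart_eq_coset (hn0 : 0 < n) (c : Fin n) :
    Vpart n hn0 c = coset (Equiv.swap ⟨n - 1, Nat.sub_lt hn0 Nat.one_pos⟩ c) (n - 1) := by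
  ext σ
  constructor
  · intro h jx hjx
    have hj : jx = ⟨n - 1, Nat.sub_lt hn0 Nat.one_pos⟩ :=
      Fin.ext (show (jx : ℕ) = n - 1 by omega)
    rw [hj, Equiv.swap_apply_left]
    exact h
  · intro h
    have h2 := h ⟨n - 1, Nat.sub_lt hn0 Nat.one_pos⟩ le_rfl
    show σ _ = c
    rw [h2, Equiv.swap_apply_left]

end BSGAux

open BSGAux in
/-- For `n ≥ 3` and distinct `i, j ∈ [n]`, the vertex connectivity of the subgraph of the
bubble-sort graph `B_n` induced by `V_i ∪ V_j` equals `n - 2`. -/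
theorem vertexConnectivity_induce_union_Vpart (n : ℕ) (hn : 3 ≤ n) (i j : Fin n) (hij : i ≠ j) :
    vertexConnectivity ((bubbleSortGraph n).induce
      (Vpart n (by omega) i ∪ Vpart n (by omega) j)) = n - 2 := by
  classical
  have hn0 : 0 < n := by omega
  show vertexConnectivity ((bubbleSortGraph n).induce
      (Vpart n hn0 i ∪ Vpart n hn0 j)) = n - 2
  set last : Fin n := ⟨n - 1, Nat.sub_lt hn0 Nat.one_pos⟩ with hlast
  set pred : Fin n := ⟨n - 2, by omega⟩ with hpred
  have hlastv : (last : ℕ) = n - 1 := rfl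
  have hpredv : (pred : ℕ) = n - 2 := rfl
  have hlp : (last : ℕ) = (pred : ℕ) + 1 := by omega
  have hlpne : last ≠ pred := fun hc => by have := congrArg Fin.val hc; omega
  have hVmem : ∀ (c : Fin n) (σ : Equiv.Perm (Fin n)), σ ∈ Vpart n hn0 c ↔ σ last = c :=
    fun c σ => Iff.rfl
  set W : Set (Equiv.Perm (Fin n)) := Vpart n hn0 i ∪ Vpart n hn0 j with hWdef
  -- connectivity of each part after removing few faults
  have conn_part : ∀ (F : Set (Equiv.Perm (Fin n))), F.ncard ≤ n - 3 → ∀ c : Fin n,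
      ((bubbleSortGraph n).induce (Vpart n hn0 c \ F)).Connected := by
    intro F hF c
    rw [Vpart_eq_coset hn0 c]
    have h0 : (F ∩ coset (Equiv.swap ⟨n - 1, Nat.sub_lt hn0 Nat.one_pos⟩ c) (n - 1)).ncard
        ≤ F.ncard := Set.ncard_le_ncard Set.inter_subset_left (Set.toFinite _)
    have h1 := coset_conn (n - 1) (by omega)
      (Equiv.swap ⟨n - 1, Nat.sub_lt hn0 Nat.one_pos⟩ c)
      (F ∩ coset (Equiv.swap ⟨n - 1, Nat.sub_lt hn0 Nat.one_pos⟩ c) (n - 1))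
      Set.inter_subset_right (Or.inr (by omega))
    rwa [Set.diff_inter_self_eq_diff] at h1
  -- part sizes
  have part_card : ∀ c : Fin n, n - 1 ≤ (Vpart n hn0 c).ncard := by
    intro c
    rw [Vpart_eq_coset hn0 c]
    exact ncard_coset_ge _ (by omega) (by omega)
  -- whole-graph connectivity after removing at most n-3 faults
  have hbig : ∀ (F : Set (Equiv.Perm (Fin n))), F.ncard ≤ n - 3 →
      ((bubbleSortGraph n).induce (W \ F)).Connected := by
    intro F hF
    obtain ⟨σ', hσ'C, hσ'p, hσ'q⟩ := exists_two_val (1 : Equiv.Perm (Fin n)) (n - 1)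
      last pred i j hlpne hij (by omega) (by omega) (by omega) (by omega)
    rw [Equiv.Perm.one_apply] at hσ'p hσ'q
    -- X = left endpoints of the cross matching
    have hXi : ∀ τ ∈ coset σ' (n - 2), τ ∈ Vpart n hn0 i := by
      intro τ hτ
      rw [hVmem]
      rw [hτ last (by omega), hσ'p]
    have hXj : ∀ τ ∈ coset σ' (n - 2), τ pred = j := by
      intro τ hτ
      rw [hτ pred (by omega), hσ'q]
    have hXcard : n - 2 ≤ (coset σ' (n - 2)).ncard := ncard_coset_ge _ (by omega) (by omega)
    -- a surviving cross edge
    have hsurv : ∃ x ∈ coset σ' (n - 2), x ∉ F ∧ x * Equiv.swap pred last ∉ F := by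
      by_contra hc
      push_neg at hc
      have hXsub : coset σ' (n - 2) ⊆
          (F ∩ Vpart n hn0 i) ∪ (fun τ => τ * Equiv.swap pred last) '' (F ∩ Vpart n hn0 j) := by
        intro x hxX
        by_cases hxF : x ∈ F
        · exact Or.inl ⟨hxF, hXi x hxX⟩
        · right
          have hw := hc x hxX hxF
          refine ⟨x * Equiv.swap pred last, ⟨hw, ?_⟩, ?_⟩
          · rw [hVmem]
            simp only [Equiv.Perm.mul_apply, Equiv.swap_apply_right]
            exact hXj x hxX
          · show x * Equiv.swap pred last * Equiv.swap pred last = x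
            rw [mul_assoc, Equiv.swap_mul_self, mul_one]
      have h1 : (coset σ' (n - 2)).ncard ≤
          (F ∩ Vpart n hn0 i).ncard + (F ∩ Vpart n hn0 j).ncard := by
        refine le_trans (Set.ncard_le_ncard hXsub (Set.toFinite _)) ?_
        refine le_trans (Set.ncard_union_le _ _) ?_
        exact add_le_add le_rfl (Set.ncard_image_le (Set.toFinite _))
      have hdisj : Disjoint (F ∩ Vpart n hn0 i) (F ∩ Vpart n hn0 j) := by
        rw [Set.disjoint_left]
        rintro τ ⟨_, hτi⟩ ⟨_, hτj⟩
        rw [hVmem] at hτi hτj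
        exact hij (hτi ▸ hτj ▸ rfl)
      have h2 : (F ∩ Vpart n hn0 i).ncard + (F ∩ Vpart n hn0 j).ncard ≤ F.ncard := by
        rw [← Set.ncard_union_eq hdisj (Set.toFinite _) (Set.toFinite _)]
        exact Set.ncard_le_ncard (Set.union_subset Set.inter_subset_left Set.inter_subset_left)
          (Set.toFinite _)
      omega
    obtain ⟨x, hxX, hxF, hwF⟩ := hsurv
    have hwVj : x * Equiv.swap pred last ∈ Vpart n hn0 j := by
      rw [hVmem]
      simp only [Equiv.Perm.mul_apply, Equiv.swap_apply_right]
      exact hXj x hxX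
    rw [hWdef, Set.union_diff_distrib]
    exact SimpleGraph.connected_induce_union (conn_part F hF i).preconnected (conn_part F hF j).preconnected
      ⟨hXi x hxX, hxF⟩ ⟨hwVj, hwF⟩ (adj_mul_swap hlp)
  -- two survivors
  have hsurvivors : ∀ (F : Set (Equiv.Perm (Fin n))), F.ncard ≤ n - 3 → ∀ c : Fin n,
      ∃ σ, σ ∈ Vpart n hn0 c ∧ σ ∉ F := by
    intro F hF c
    by_contra hc
    push_neg at hc
    have hsub : Vpart n hn0 c ⊆ F := fun σ hσ => hc σ hσ
    have := Set.ncard_le_ncard hsub (Set.toFinite _)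
    have := part_card c
    omega
  rw [vertexConnectivity]
  have hmem : (n - 2) ∈ {k : ℕ | ∃ S : Set ↥W, S.ncard = k ∧
      (¬ (((bubbleSortGraph n).induce W).induce Sᶜ).Connected ∨ (Sᶜ).ncard ≤ 1)} := by
    -- choose k ∉ {i, j}
    obtain ⟨k, hki, hkj⟩ : ∃ k : Fin n, k ≠ i ∧ k ≠ j := by
      by_contra hc
      push_neg at hc
      have hsub : (Finset.univ : Finset (Fin n)) ⊆ {i, j} := by
        intro x _
        rcases eq_or_ne x i with h | h
        · simp [h]
        · simp [hc x h]
      have h1 := Finset.card_le_card hsub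
      have h2 : ({i, j} : Finset (Fin n)).card ≤ 2 :=
        le_trans (Finset.card_insert_le _ _) (by simp)
      simp only [Finset.card_univ, Fintype.card_fin] at h1
      omega
    obtain ⟨v0, hv0C, hv0p, hv0q⟩ := exists_two_val (1 : Equiv.Perm (Fin n)) (n - 1)
      last pred i k hlpne hki.symm (by omega) (by omega) (by omega) (by omega)
    rw [Equiv.Perm.one_apply] at hv0p hv0q
    set fS : Fin (n - 2) → Equiv.Perm (Fin n) :=
      fun t => v0 * Equiv.swap ⟨(t : ℕ), by omega⟩ ⟨(t : ℕ) + 1, by omega⟩ with hfS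
    have hfSval : ∀ t : Fin (n - 2), (fS t) last = i := by
      intro t
      have h1 : last ≠ (⟨(t : ℕ), by omega⟩ : Fin n) := by
        intro hc2; have := congrArg Fin.val hc2; simp at this; omega
      have h2 : last ≠ (⟨(t : ℕ) + 1, by omega⟩ : Fin n) := by
        intro hc2; have := congrArg Fin.val hc2; simp at this; omega
      simp only [hfS, Equiv.Perm.mul_apply]
      rw [Equiv.swap_apply_of_ne_of_ne h1 h2]
      exact hv0p
    have hfSinj : Function.Injective fS := by
      intro s t h
      have h2 : Equiv.swap (⟨(s : ℕ), by omega⟩ : Fin n) ⟨(s : ℕ) + 1, by omega⟩ =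
          Equiv.swap (⟨(t : ℕ), by omega⟩ : Fin n) ⟨(t : ℕ) + 1, by omega⟩ :=
        mul_left_cancel h
      have h3 := congrArg (fun e : Equiv.Perm (Fin n) => e ⟨(s : ℕ), by omega⟩) h2
      simp only [Equiv.swap_apply_left] at h3
      rw [Equiv.swap_apply_def] at h3
      split_ifs at h3 with h4 h5
      · have := congrArg Fin.val h4
        simp only [Fin.val_mk] at this ⊢
        exact Fin.ext (by omega)
      · have e1 := congrArg Fin.val h5
        have e2 := congrArg Fin.val h3
        simp only [Fin.val_mk] at e1 e2
        omega
      · have e2 := congrArg Fin.val h3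
        simp only [Fin.val_mk] at e2
        omega
    set S0 : Set (Equiv.Perm (Fin n)) := Set.range fS with hS0
    have hS0i : S0 ⊆ Vpart n hn0 i := by
      rintro τ ⟨t, rfl⟩
      rw [hVmem]
      exact hfSval t
    have hS0W : S0 ⊆ W := fun τ hτ => Or.inl (hS0i hτ)
    have hS0card : S0.ncard = n - 2 := by
      rw [hS0, ← Set.image_univ, Set.ncard_image_of_injective _ hfSinj, Set.ncard_univ,
        Nat.card_eq_fintype_card, Fintype.card_fin]
    set S : Set ↥W := Subtype.val ⁻¹' S0 with hS
    have hSval : Subtype.val '' S = S0 := by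
      rw [hS, Subtype.image_preimage_coe]
      exact Set.inter_eq_self_of_subset_right hS0W
    have hScard : S.ncard = n - 2 := by
      rw [← hS0card, ← hSval, Set.ncard_image_of_injective _ Subtype.val_injective]
    -- isolated vertex v0
    have hv0W : v0 ∈ W := Or.inl (by rw [hVmem]; exact hv0p)
    have hv0S0 : v0 ∉ S0 := by
      rintro ⟨t, ht⟩
      have h1 : v0 * Equiv.swap ⟨(t : ℕ), by omega⟩ ⟨(t : ℕ) + 1, by omega⟩ = v0 * 1 := by
        rw [mul_one]; exact ht
      have h2 := mul_left_cancel h1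
      rw [Equiv.swap_eq_one_iff] at h2
      have := congrArg Fin.val h2
      simp at this
    -- second vertex in the complement
    have hw1j : Equiv.swap last j last = j := Equiv.swap_apply_left _ _
    have hw1W : Equiv.swap last j ∈ W := Or.inr (by rw [hVmem]; exact hw1j)
    have hw1S0 : Equiv.swap last j ∉ S0 := by
      intro hmem2
      have h1 : (Equiv.swap last j : Equiv.Perm (Fin n)) last = i := by
        have := hS0i hmem2
        rw [hVmem] at this
        exact this
      rw [hw1j] at h1
      exact hij h1.symm
    have hv0w1 : v0 ≠ Equiv.swap last j := by
      intro hc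
      have h1 : v0 last = j := by rw [hc]; exact hw1j
      rw [hv0p] at h1
      exact hij h1
    -- v0's neighbors inside W are all in S0
    have hnbr : ∀ τ : Equiv.Perm (Fin n), (bubbleSortGraph n).Adj v0 τ → τ ∈ W → τ ∈ S0 := by
      intro τ hadj hτW
      rw [bsg_adj_iff] at hadj
      obtain ⟨hne, p, q, hq, rfl⟩ := hadj
      by_cases hqtop : (q : ℕ) ≤ n - 2
      · refine ⟨⟨(p : ℕ), by omega⟩, ?_⟩
        show v0 * Equiv.swap _ _ = v0 * Equiv.swap p q
        exact congrArg₂ (fun a b : Fin n => v0 * Equiv.swap a b)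
          (Fin.ext rfl) (Fin.ext (by simp only [Fin.val_mk]; omega))
      · exfalso
        have hq1 : q = last := Fin.ext (by omega)
        have hp1 : p = pred := Fin.ext (by omega)
        subst hq1; subst hp1
        have hτlast : (v0 * Equiv.swap pred last) last = k := by
          simp only [Equiv.Perm.mul_apply, Equiv.swap_apply_right]
          exact hv0q
        rcases hτW with h | h
        · rw [hVmem] at h; rw [hτlast] at h; exact hki h
        · rw [hVmem] at h; rw [hτlast] at h; exact hkj h
    refine ⟨S, hScard, Or.inl ?_⟩
    have hx0c : (⟨v0, hv0W⟩ : ↥W) ∈ Sᶜ := fun hmem2 => hv0S0 hmem2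
    have hx1c : (⟨Equiv.swap last j, hw1W⟩ : ↥W) ∈ Sᶜ := fun hmem2 => hw1S0 hmem2
    apply not_connected_of_isolated _ ⟨⟨v0, hv0W⟩, hx0c⟩ ⟨⟨Equiv.swap last j, hw1W⟩, hx1c⟩
    · intro hc
      exact hv0w1 (congrArg Subtype.val (congrArg Subtype.val hc))
    · rintro ⟨⟨τ, hτW⟩, hτc⟩ hadj
      have hGadj : (bubbleSortGraph n).Adj v0 τ := hadj
      exact hτc (hnbr τ hGadj hτW)
  have hlb : ∀ kk ∈ {k : ℕ | ∃ S : Set ↥W, S.ncard = k ∧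
      (¬ (((bubbleSortGraph n).induce W).induce Sᶜ).Connected ∨ (Sᶜ).ncard ≤ 1)}, n - 2 ≤ kk := by
    rintro kk ⟨S, hScard, hdisj⟩
    by_contra hlt
    push_neg at hlt
    set F : Set (Equiv.Perm (Fin n)) := Subtype.val '' S with hF
    have hFcard : F.ncard = kk := by
      rw [hF, Set.ncard_image_of_injective _ Subtype.val_injective, hScard]
    have hFn3 : F.ncard ≤ n - 3 := by omega
    have hA : (((bubbleSortGraph n).induce W).induce Sᶜ).Connected := by
      rw [induce_induce_connected_iff, image_val_compl]
      exact hbig F hFn3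
    obtain ⟨σi, hσiV, hσiF⟩ := hsurvivors F hFn3 i
    obtain ⟨σj, hσjV, hσjF⟩ := hsurvivors F hFn3 j
    have hxic : (⟨σi, Or.inl hσiV⟩ : ↥W) ∈ Sᶜ := fun hmem2 => hσiF ⟨_, hmem2, rfl⟩
    have hxjc : (⟨σj, Or.inr hσjV⟩ : ↥W) ∈ Sᶜ := fun hmem2 => hσjF ⟨_, hmem2, rfl⟩
    have hxij : (⟨σi, Or.inl hσiV⟩ : ↥W) ≠ ⟨σj, Or.inr hσjV⟩ := by
      intro hc
      have h1 : σi = σj := congrArg Subtype.val hc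
      rw [hVmem] at hσiV hσjV
      rw [h1, hσjV] at hσiV
      exact hij hσiV.symm
    have hB : 1 < (Sᶜ : Set ↥W).ncard :=
      (Set.one_lt_ncard_iff (Set.toFinite _)).2 ⟨_, _, hxic, hxjc, hxij⟩
    rcases hdisj with h | h
    · exact h hA
    · omega
  exact le_antisymm (Nat.sInf_le hmem) (le_csInf ⟨_, hmem⟩ hlb)
end
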